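/- For all s, t ∈ S: an ultrafilter ξ belongs to Ω_{(t*s)⋆ * (t*s)} if and only if ξ ∈ Ω_{s⋆ * s} and λ_s(ξ) ∈ Ω_{t⋆ * t}; and for every ξ ∈ Ω_{(t*s)⋆ * (t*s)} one has λ_t(λ_s(ξ)) = λ_{t*s}(ξ). In other words, as partially defined bijections on Ω, λ_t ∘ λ_s = λ_{t*s}. -/
import Mathlib


/-- An inverse semigroup with zero: every element `s` has a unique generalized
inverse `star s`, and `0` is absorbing. -/
class InverseSemigroupWithZero (S : Type*) extends Semigroup S, Zero S, Star S where
  zero_mul : ∀ s : S, 0 * s = 0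
  mul_zero : ∀ s : S, s * 0 = 0
  mul_star_mul_self : ∀ s : S, s * star s * s = s
  star_mul_self_star : ∀ s : S, star s * s * star s = star s
  star_unique : ∀ s x : S, s * x * s = s → x * s * x = x → x = star s

variable {S : Type*} [InverseSemigroupWithZero S]

/-- The natural partial order on an inverse semigroup: `s ≤ t` iff `t * s⋆ * s = s`. -/
def natLe (s t : S) : Prop := t * star s * s = s

/-- A filter in the inverse semigroup `S` (w.r.t. the natural partial order). -/
def IsFilterS (ξ : Set S) : Prop :=
  ξ.Nonempty ∧ (0 : S) ∉ ξ ∧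
    (∀ x ∈ ξ, ∀ y : S, natLe x y → y ∈ ξ) ∧
    ∀ x ∈ ξ, ∀ y ∈ ξ, ∃ z ∈ ξ, natLe z x ∧ natLe z y

/-- An ultrafilter: a filter maximal under inclusion. -/
def IsUltraS (ξ : Set S) : Prop :=
  IsFilterS ξ ∧ ∀ η : Set S, IsFilterS η → ξ ⊆ η → η = ξ

/-- The set `Ω` of all ultrafilters in `S`. -/
def OmegaAll (S : Type*) [InverseSemigroupWithZero S] : Set (Set S) := {ξ | IsUltraS ξ}

/-- `Ω_e`: the set of ultrafilters `ξ` with `eξ ⊆ ξ`. -/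
def OmegaE (e : S) : Set (Set S) := {ξ | IsUltraS ξ ∧ ∀ t ∈ ξ, e * t ∈ ξ}

/-- The map `λₛ` on filters. -/
def lambdaMap (s : S) (ξ : Set S) : Set S := {u | ∃ t ∈ ξ, natLe (s * t) u}

/-- `y` is dense in `x` (for idempotents `y ≤ x`): there is no nonzero idempotent
`z ≤ x` with `z * y = 0`. -/
def DenseIn (y x : S) : Prop :=
  ∀ z : S, IsIdempotentElem z → z * x = z → z * y = 0 → z = 0

/-- `s` essentially coincides with `t`. -/
def EssEq (s t : S) : Prop :=
  star s * s = star t * t ∧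
    ∀ f : S, IsIdempotentElem f → f ≠ 0 → f * (star s * s) = f →
      ∃ e : S, IsIdempotentElem e ∧ e ≠ 0 ∧ e * f = e ∧ s * e = t * e

section Aux

lemma zmul (s : S) : (0:S) * s = 0 := InverseSemigroupWithZero.zero_mul s
lemma mz (s : S) : s * (0:S) = 0 := InverseSemigroupWithZero.mul_zero s
lemma mss (s : S) : s * star s * s = s := InverseSemigroupWithZero.mul_star_mul_self s
lemma smss (s : S) : star s * s * star s = star s := InverseSemigroupWithZero.star_mul_self_star s
lemma suniq (s x : S) (h1 : s * x * s = s) (h2 : x * s * x = x) : x = star s :=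
  InverseSemigroupWithZero.star_unique s x h1 h2

lemma lemA (s x : S) : s * (star s * (s * x)) = s * x := by
  rw [← mul_assoc, ← mul_assoc, mss]

lemma lemB (s x : S) : star s * (s * (star s * x)) = star s * x := by
  rw [← mul_assoc, ← mul_assoc, smss]

lemma lemA' (s : S) : s * (star s * s) = s := by rw [← mul_assoc]; exact mss s

lemma lemB' (s : S) : star s * (s * star s) = star s := by rw [← mul_assoc]; exact smss s

lemma isw_star_star (s : S) : star (star s) = s :=
  (suniq (star s) s (smss s) (mss s)).symm

lemma idem_cancel {e : S} (he : IsIdempotentElem e) (x : S) : e * (e * x) = e * x := by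
  rw [← mul_assoc, he.eq]

lemma star_of_idem {e : S} (he : IsIdempotentElem e) : star e = e := by
  have h1 : e * e * e = e := by rw [he.eq, he.eq]
  exact (suniq e e h1 h1).symm

lemma idem_sts (s : S) : IsIdempotentElem (star s * s) := by
  show (star s * s) * (star s * s) = star s * s
  rw [mul_assoc, ← mul_assoc s, mss]

lemma idem_sst (s : S) : IsIdempotentElem (s * star s) := by
  have := idem_sts (star s); rwa [isw_star_star] at this

lemma key_star {e f : S} (he : IsIdempotentElem e) (hf : IsIdempotentElem f) :
    f * star (e * f) * e = star (e * f) := by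
  apply suniq
  · have h := mss (e * f)
    simp only [mul_assoc] at h ⊢
    rw [idem_cancel hf, idem_cancel he]
    exact h
  · have hb := lemB (e * f) e
    simp only [mul_assoc] at hb ⊢
    rw [idem_cancel he, idem_cancel hf, hb]

lemma idem_mul {e f : S} (he : IsIdempotentElem e) (hf : IsIdempotentElem f) :
    IsIdempotentElem (e * f) := by
  set a := star (e * f) with ha
  have key : f * a * e = a := key_star he hf
  have h2 : (f * a * e) * (f * a * e) = f * a * e := by
    simp only [mul_assoc]
    have hb := lemB (e * f) e
    simp only [mul_assoc] at hb
    rw [hb]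
  have idem_a : IsIdempotentElem a := by
    show a * a = a
    rw [← key]; exact h2
  have hae : e * f = a := by
    have h1 := isw_star_star (e * f)
    rw [show star (star (e*f)) = star a from rfl, star_of_idem idem_a] at h1
    exact h1.symm
  show (e * f) * (e * f) = e * f
  rw [hae]; exact idem_a

lemma idem_comm {e f : S} (he : IsIdempotentElem e) (hf : IsIdempotentElem f) :
    e * f = f * e := by
  have k := key_star he hf
  have s1 : star (e * f) = e * f := star_of_idem (idem_mul he hf)
  rw [s1] at k
  have h : f * (e * f) * e = (f * e) * (f * e) := by simp only [mul_assoc]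
  rw [h, (idem_mul hf he).eq] at k
  exact k.symm

lemma isw_star_mul (a b : S) : star (a * b) = star b * star a := by
  refine (suniq (a*b) (star b * star a) ?_ ?_).symm
  · have c : (b * star b) * (star a * a) = (star a * a) * (b * star b) :=
      idem_comm (idem_sst b) (idem_sts a)
    have c' : ((b * star b) * (star a * a)) * b = ((star a * a) * (b * star b)) * b := by rw [c]
    simp only [mul_assoc] at c' ⊢
    rw [c', lemA, lemA']
  · have c : (star a * a) * (b * star b) = (b * star b) * (star a * a) :=
      idem_comm (idem_sts a) (idem_sst b)
    have c' : ((star a * a) * (b * star b)) * star a = ((b * star b) * (star a * a)) * star a := by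
      rw [c]
    simp only [mul_assoc] at c' ⊢
    rw [c', lemB, lemB']

lemma conj_idem {e : S} (he : IsIdempotentElem e) (a : S) :
    IsIdempotentElem (star a * e * a) := by
  show (star a * e * a) * (star a * e * a) = star a * e * a
  have c : (a * star a) * e = e * (a * star a) := idem_comm (idem_sst a) he
  have c' : ((a * star a) * e) * a = (e * (a * star a)) * a := by rw [c]
  simp only [mul_assoc] at c' ⊢
  rw [c', idem_cancel he, lemA']

lemma mul_conj {e : S} (he : IsIdempotentElem e) (a : S) :
    e * a = a * (star a * e * a) := by
  have c : (a * star a) * e = e * (a * star a) := idem_comm (idem_sst a) he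
  have c' : ((a * star a) * e) * a = (e * (a * star a)) * a := by rw [c]
  simp only [mul_assoc] at c' ⊢
  rw [c', lemA']

lemma natLe_iff {s t : S} : natLe s t ↔ ∃ e, IsIdempotentElem e ∧ s = t * e := by
  constructor
  · intro h
    exact ⟨star s * s, idem_sts s, by rw [← mul_assoc]; exact h.symm⟩
  · rintro ⟨e, he, rfl⟩
    show t * star (t * e) * (t * e) = t * e
    rw [isw_star_mul, star_of_idem he]
    have c : e * (star t * t) = (star t * t) * e := idem_comm he (idem_sts t)
    have c' : (e * (star t * t)) * e = ((star t * t) * e) * e := by rw [c]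
    simp only [mul_assoc] at c' ⊢
    rw [c', he.eq, lemA]

lemma natLe_refl (s : S) : natLe s s := mss s

lemma natLe_trans {a b c : S} (h1 : natLe a b) (h2 : natLe b c) : natLe a c := by
  obtain ⟨e, he, rfl⟩ := natLe_iff.mp h1
  obtain ⟨f, hf, rfl⟩ := natLe_iff.mp h2
  exact natLe_iff.mpr ⟨f * e, idem_mul hf he, by rw [mul_assoc]⟩

lemma natLe_mul_left (c : S) {a b : S} (h : natLe a b) : natLe (c * a) (c * b) := by
  obtain ⟨e, he, rfl⟩ := natLe_iff.mp h
  exact natLe_iff.mpr ⟨e, he, by rw [mul_assoc]⟩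

lemma natLe_zero {a : S} (h : natLe a 0) : a = 0 := by
  unfold natLe at h
  rw [zmul, zmul] at h
  exact h.symm

lemma natLe_ne_zero {a b : S} (h : natLe a b) (hb : b = 0) : a = 0 := by
  obtain ⟨e, -, rfl⟩ := natLe_iff.mp h
  rw [hb, zmul]

lemma natLe_of_idem_mul {e : S} (he : IsIdempotentElem e) (x : S) : natLe (e * x) x :=
  natLe_iff.mpr ⟨star x * e * x, conj_idem he x, mul_conj he x⟩

lemma mem_lambda_self {s : S} {ξ : Set S} {x : S} (hx : x ∈ ξ) : s * x ∈ lambdaMap s ξ :=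
  ⟨x, hx, natLe_refl _⟩

lemma filter_lambda {s : S} {ξ : Set S} (hξ : IsFilterS ξ) (hne : ∀ x ∈ ξ, s * x ≠ 0) :
    IsFilterS (lambdaMap s ξ) := by
  obtain ⟨⟨x0, hx0⟩, h0, hup, hdir⟩ := hξ
  refine ⟨⟨s * x0, x0, hx0, natLe_refl _⟩, ?_, ?_, ?_⟩
  · rintro ⟨x, hx, hle⟩
    exact hne x hx (natLe_zero hle)
  · rintro u ⟨x, hx, hle⟩ y huy
    exact ⟨x, hx, natLe_trans hle huy⟩
  · rintro u ⟨x, hx, hxu⟩ v ⟨y, hy, hyv⟩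
    obtain ⟨z, hz, hzx, hzy⟩ := hdir x hx y hy
    exact ⟨s * z, ⟨z, hz, natLe_refl _⟩,
      natLe_trans (natLe_mul_left s hzx) hxu, natLe_trans (natLe_mul_left s hzy) hyv⟩

lemma omegaE_char {e : S} (he : IsIdempotentElem e) {ξ : Set S} (hξ : IsUltraS ξ) :
    (∀ x ∈ ξ, e * x ∈ ξ) ↔ (∀ x ∈ ξ, e * x ≠ 0) := by
  constructor
  · intro h x hx h0
    exact hξ.1.2.1 (h0 ▸ h x hx)
  · intro h
    have hf : IsFilterS (lambdaMap e ξ) := filter_lambda hξ.1 h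
    have hsub : ξ ⊆ lambdaMap e ξ := fun x hx => ⟨x, hx, natLe_of_idem_mul he x⟩
    have heq := hξ.2 _ hf hsub
    intro x hx
    rw [← heq]
    exact mem_lambda_self hx

lemma ultra_lambda {s : S} {ξ : Set S} (hξ : IsUltraS ξ) (h : ∀ x ∈ ξ, star s * s * x ∈ ξ) :
    IsUltraS (lambdaMap s ξ) := by
  have hne : ∀ x ∈ ξ, s * x ≠ 0 := by
    intro x hx h0
    apply hξ.1.2.1
    have hz : star s * s * x = 0 := by rw [mul_assoc, h0, mz]
    exact hz ▸ h x hx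
  have hfil := filter_lambda hξ.1 hne
  refine ⟨hfil, ?_⟩
  intro η hη hsub
  have hηne : ∀ w ∈ η, star s * w ≠ 0 := by
    intro w hw h0
    obtain ⟨x0, hx0⟩ := hξ.1.1
    have hsx : s * x0 ∈ η := hsub (mem_lambda_self hx0)
    obtain ⟨z, hz, hzw, hzs⟩ := hη.2.2.2 w hw (s * x0) hsx
    obtain ⟨f, hf, hzf⟩ := natLe_iff.mp hzs
    have hzz : s * (star s * z) = z := by
      rw [hzf]
      simp only [mul_assoc]
      exact lemA s (x0 * f)
    have hz0 : z = 0 := by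
      have hsz : star s * z = 0 := natLe_ne_zero (natLe_mul_left (star s) hzw) h0
      rw [← hzz, hsz, mz]
    exact hη.2.1 (hz0 ▸ hz)
  have hζ : IsFilterS (lambdaMap (star s) η) := filter_lambda hη hηne
  have hsub2 : ξ ⊆ lambdaMap (star s) η := by
    intro x hx
    refine ⟨s * x, hsub (mem_lambda_self hx), ?_⟩
    have hh := natLe_of_idem_mul (idem_sts s) x
    rwa [mul_assoc] at hh
  have hζξ : lambdaMap (star s) η = ξ := hξ.2 _ hζ hsub2
  have hsub3 : η ⊆ lambdaMap s ξ := by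
    intro w hw
    have hsw : star s * w ∈ ξ := hζξ ▸ mem_lambda_self hw
    refine ⟨star s * w, hsw, ?_⟩
    have hh := natLe_of_idem_mul (idem_sst s) w
    rwa [mul_assoc] at hh
  exact Set.Subset.antisymm hsub3 hsub

lemma key_zero (s t x : S) :
    (star (t * s) * (t * s)) * x = 0 ↔ star t * t * (s * x) = 0 := by
  have heq : s * ((star (t * s) * (t * s)) * x) = star t * t * (s * x) := by
    rw [isw_star_mul]
    have c : (s * star s) * (star t * t) = (star t * t) * (s * star s) :=
      idem_comm (idem_sst s) (idem_sts t)
    have c' : ((s * star s) * (star t * t)) * (s * x) =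
        ((star t * t) * (s * star s)) * (s * x) := by rw [c]
    simp only [mul_assoc] at c' ⊢
    rw [c', lemA]
  constructor
  · intro h
    rw [← heq, h, mz]
  · intro h
    have heq2 : (star (t * s) * (t * s)) * x = star s * (star t * t * (s * x)) := by
      rw [isw_star_mul]
      simp only [mul_assoc]
    rw [heq2, h, mz]

lemma key_zero2 (s t x : S) (h : star s * s * x = 0) :
    (star (t * s) * (t * s)) * x = 0 := by
  have hsx : s * x = 0 := by
    have hh : s * (star s * s * x) = s * x := by
      simp only [mul_assoc]
      exact lemA s x
    rw [← hh, h, mz]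
  rw [isw_star_mul]
  simp only [mul_assoc]
  rw [hsx, mz, mz, mz]

end Aux

theorem lambdaMap_comp (s t : S) :
    (∀ ξ : Set S,
        ξ ∈ OmegaE (star (t * s) * (t * s)) ↔
          ξ ∈ OmegaE (star s * s) ∧ lambdaMap s ξ ∈ OmegaE (star t * t)) ∧
      ∀ ξ ∈ OmegaE (star (t * s) * (t * s)),
        lambdaMap t (lambdaMap s ξ) = lambdaMap (t * s) ξ := by
  constructor
  · intro ξ
    constructor
    · rintro ⟨hu, hmem⟩
      have he0 : IsIdempotentElem (star (t * s) * (t * s)) := idem_sts (t * s)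
      have hnz : ∀ x ∈ ξ, (star (t * s) * (t * s)) * x ≠ 0 := (omegaE_char he0 hu).mp hmem
      have h1 : ∀ x ∈ ξ, star s * s * x ≠ 0 := by
        intro x hx h0
        exact hnz x hx (key_zero2 s t x h0)
      have hΩs : ξ ∈ OmegaE (star s * s) := ⟨hu, (omegaE_char (idem_sts s) hu).mpr h1⟩
      refine ⟨hΩs, ?_⟩
      have hul : IsUltraS (lambdaMap s ξ) := ultra_lambda hu hΩs.2
      refine ⟨hul, ?_⟩
      apply (omegaE_char (idem_sts t) hul).mpr
      rintro u ⟨x, hx, hle⟩ h0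
      have h1' : star t * t * (s * x) = 0 :=
        natLe_ne_zero (natLe_mul_left (star t * t) hle) h0
      exact hnz x hx ((key_zero s t x).mpr h1')
    · rintro ⟨⟨hu, _hmem⟩, hul, hmem2⟩
      refine ⟨hu, ?_⟩
      apply (omegaE_char (idem_sts (t * s)) hu).mpr
      intro x hx h0
      have hsx : s * x ∈ lambdaMap s ξ := mem_lambda_self hx
      have hmm : star t * t * (s * x) ∈ lambdaMap s ξ := hmem2 _ hsx
      have hz : star t * t * (s * x) ≠ 0 := fun h0' => hul.1.2.1 (h0' ▸ hmm)
      exact hz ((key_zero s t x).mp h0)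
  · intro ξ _
    ext u
    constructor
    · rintro ⟨v, ⟨x, hx, hxv⟩, hvu⟩
      refine ⟨x, hx, ?_⟩
      have hh : natLe (t * (s * x)) u := natLe_trans (natLe_mul_left t hxv) hvu
      rwa [← mul_assoc] at hh
    · rintro ⟨x, hx, hle⟩
      exact ⟨s * x, mem_lambda_self hx, by rwa [mul_assoc] at hle⟩
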